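/- arXiv:1201.4134 — 3 statements merged into one kernel-verified Lean document; each statement's English description precedes it below -/
import Mathlib

section
/- Let y > 0 and let f : [0,2\pi] \to [0,\infty) be continuous. Then there is at most one function s : \mathbb{C}^+ \to \mathbb{C}^+ satisfying 1/s(z) = -z + y \int_0^{2\pi} f(\omega)/(1 + f(\omega) s(z)) d\omega for all z \in \mathbb{C}^+. -/
/-!
Suppose `a` and `b` in `ℂ⁺` both solve the equation at the same `z`, and `a ≠ b`. Subtracting
the two equations and dividing by `b - a` gives `1 = y ∫ (a g_a)(b g_b)`, where
`g_s = f / (1 + f s)`. Taking imaginary parts of the equation for `s` gives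
`Im s / |s|² = Im z + y Im s ∫ |g_s|²`, hence `y ∫ |s g_s|² < 1`. By AM-GM under the integral,
`1 ≤ y (∫ |a g_a|² + ∫ |b g_b|²) / 2 < 1`, a contradiction.
-/

open MeasureTheory

namespace Complex

lemma one_add_ofReal_mul_ne_zero (c : ℝ) {s : ℂ} (hs : s.im ≠ 0) : 1 + (c : ℂ) * s ≠ 0 := by
  intro h
  have him : c * s.im = 0 := by simpa using congrArg im h
  rcases mul_eq_zero.mp him with rfl | h'
  · simp at h
  · exact hs h'

lemma continuous_ofReal_div_one_add_ofReal_mul {s : ℂ} (hs : s.im ≠ 0) :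
    Continuous fun c : ℝ => (c : ℂ) / (1 + c * s) :=
  continuous_ofReal.div (continuous_const.add (continuous_ofReal.mul continuous_const))
    fun c => one_add_ofReal_mul_ne_zero c hs

lemma norm_ofReal_div_one_add_ofReal_mul_le (c : ℝ) {s : ℂ} (hs : 0 < s.im) :
    ‖(c : ℂ) / (1 + c * s)‖ ≤ s.im⁻¹ := by
  have hden := norm_pos_iff.mpr (one_add_ofReal_mul_ne_zero c hs.ne')
  rw [norm_div, norm_real, Real.norm_eq_abs, div_le_iff₀ hden, inv_mul_eq_div, le_div_iff₀ hs]
  calc |c| * s.im = |(1 + (c : ℂ) * s).im| := by simp [abs_mul, abs_of_pos hs]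
    _ ≤ ‖1 + (c : ℂ) * s‖ := abs_im_le_norm _

lemma im_ofReal_div_one_add_ofReal_mul (c : ℝ) (s : ℂ) :
    ((c : ℂ) / (1 + c * s)).im = -s.im * ‖(c : ℂ) / (1 + c * s)‖ ^ 2 := by
  rw [div_im, norm_div, div_pow, ← normSq_eq_norm_sq, ← normSq_eq_norm_sq]
  simp [normSq_apply]
  ring

lemma ofReal_div_one_add_ofReal_mul_sub (c : ℝ) {a b : ℂ} (ha : a.im ≠ 0) (hb : b.im ≠ 0) :
    (c : ℂ) / (1 + c * a) - c / (1 + c * b) = (b - a) * (c / (1 + c * a) * (c / (1 + c * b))) := by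
  have := one_add_ofReal_mul_ne_zero c ha
  have := one_add_ofReal_mul_ne_zero c hb
  field_simp
  ring

end Complex

section

variable {α : Type*} [MeasurableSpace α] {μ : Measure α}

lemma norm_integral_mul_le_half_add {𝕜 : Type*} [RCLike 𝕜] {u v : α → 𝕜}
    (hu : Integrable (fun x => ‖u x‖ ^ 2) μ) (hv : Integrable (fun x => ‖v x‖ ^ 2) μ) :
    ‖∫ x, u x * v x ∂μ‖ ≤ ((∫ x, ‖u x‖ ^ 2 ∂μ) + ∫ x, ‖v x‖ ^ 2 ∂μ) / 2 :=
  calc ‖∫ x, u x * v x ∂μ‖ ≤ ∫ x, ‖u x * v x‖ ∂μ := norm_integral_le_integral_norm _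
    _ ≤ ∫ x, (‖u x‖ ^ 2 + ‖v x‖ ^ 2) / 2 ∂μ :=
      integral_mono_of_nonneg (ae_of_all _ fun _ => norm_nonneg _) ((hu.add hv).div_const 2)
        (ae_of_all _ fun x => by
          dsimp only
          rw [norm_mul]; linarith [two_mul_le_add_sq ‖u x‖ ‖v x‖])
    _ = _ := by rw [integral_div, integral_add hu hv]

variable {f : α → ℝ} {s : ℂ}

lemma aestronglyMeasurable_ofReal_div_one_add_ofReal_mul (hf : AEStronglyMeasurable f μ)
    (hs : s.im ≠ 0) : AEStronglyMeasurable (fun x => (f x : ℂ) / (1 + f x * s)) μ :=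
  (Complex.continuous_ofReal_div_one_add_ofReal_mul hs).comp_aestronglyMeasurable hf

variable [IsFiniteMeasure μ]

lemma integrable_ofReal_div_one_add_ofReal_mul (hf : AEStronglyMeasurable f μ) (hs : 0 < s.im) :
    Integrable (fun x => (f x : ℂ) / (1 + f x * s)) μ :=
  .of_bound (aestronglyMeasurable_ofReal_div_one_add_ofReal_mul hf hs.ne') s.im⁻¹
    (ae_of_all _ fun x => Complex.norm_ofReal_div_one_add_ofReal_mul_le (f x) hs)

lemma integrable_norm_const_mul_ofReal_div_one_add_ofReal_mul_sq (hf : AEStronglyMeasurable f μ)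
    (hs : 0 < s.im) (w : ℂ) :
    Integrable (fun x => ‖w * ((f x : ℂ) / (1 + f x * s))‖ ^ 2) μ :=
  .of_bound
    (((aestronglyMeasurable_ofReal_div_one_add_ofReal_mul hf hs.ne').const_mul w).norm.pow 2)
    ((‖w‖ * s.im⁻¹) ^ 2)
    (ae_of_all _ fun x => by
      rw [norm_mul, Real.norm_eq_abs, abs_pow, abs_mul, abs_norm, abs_norm]
      gcongr
      exact Complex.norm_ofReal_div_one_add_ofReal_mul_le (f x) hs)

lemma im_integral_ofReal_div_one_add_ofReal_mul (hf : AEStronglyMeasurable f μ) (hs : 0 < s.im) :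
    (∫ x, (f x : ℂ) / (1 + f x * s) ∂μ).im =
      -s.im * ∫ x, ‖(f x : ℂ) / (1 + f x * s)‖ ^ 2 ∂μ := by
  rw [← integral_const_mul, ← RCLike.im_to_complex,
    ← integral_im (integrable_ofReal_div_one_add_ofReal_mul hf hs)]
  simp only [RCLike.im_to_complex, Complex.im_ofReal_div_one_add_ofReal_mul]

lemma integral_ofReal_div_one_add_ofReal_mul_sub (hf : AEStronglyMeasurable f μ) {a b : ℂ}
    (ha : 0 < a.im) (hb : 0 < b.im) :
    ∫ x, (f x : ℂ) / (1 + f x * a) ∂μ - ∫ x, (f x : ℂ) / (1 + f x * b) ∂μ =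
      (b - a) * ∫ x, (f x : ℂ) / (1 + f x * a) * ((f x : ℂ) / (1 + f x * b)) ∂μ := by
  rw [← integral_sub (integrable_ofReal_div_one_add_ofReal_mul hf ha)
    (integrable_ofReal_div_one_add_ofReal_mul hf hb), ← integral_const_mul]
  simp_rw [Complex.ofReal_div_one_add_ofReal_mul_sub _ ha.ne' hb.ne']

variable {y : ℝ} {z : ℂ}

lemma mul_integral_norm_mul_ofReal_div_one_add_ofReal_mul_sq_lt_one
    (hf : AEStronglyMeasurable f μ) (hz : 0 < z.im) (hs : 0 < s.im)
    (heq : s⁻¹ = -z + y * ∫ x, (f x : ℂ) / (1 + f x * s) ∂μ) :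
    y * ∫ x, ‖s * ((f x : ℂ) / (1 + f x * s))‖ ^ 2 ∂μ < 1 := by
  have him := congrArg Complex.im heq
  rw [Complex.inv_im, Complex.add_im, Complex.neg_im, Complex.im_ofReal_mul,
    im_integral_ofReal_div_one_add_ofReal_mul hf hs, Complex.normSq_eq_norm_sq] at him
  simp only [norm_mul, mul_pow, integral_const_mul]
  set J := ∫ x, ‖(f x : ℂ) / (1 + f x * s)‖ ^ 2 ∂μ
  have hs0 : 0 < ‖s‖ ^ 2 := by
    have : s ≠ 0 := fun h => by simp [h] at hs
    positivity
  have hbalance : s.im * (1 - y * (‖s‖ ^ 2 * J)) = z.im * ‖s‖ ^ 2 := by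
    have hcancel : s.im / ‖s‖ ^ 2 * ‖s‖ ^ 2 = s.im := div_mul_cancel₀ _ hs0.ne'
    linear_combination (-‖s‖ ^ 2) * him - hcancel
  nlinarith [mul_pos hz hs0]

theorem eq_of_inv_eq_neg_add_mul_integral (hy : 0 < y) (hf : AEStronglyMeasurable f μ)
    (hz : 0 < z.im) {a b : ℂ} (ha : 0 < a.im) (hb : 0 < b.im)
    (hea : a⁻¹ = -z + y * ∫ x, (f x : ℂ) / (1 + f x * a) ∂μ)
    (heb : b⁻¹ = -z + y * ∫ x, (f x : ℂ) / (1 + f x * b) ∂μ) : a = b := by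
  by_contra hab
  have hK_eq : ∫ x, a * ((f x : ℂ) / (1 + f x * a)) * (b * ((f x : ℂ) / (1 + f x * b))) ∂μ =
      a * b * ∫ x, (f x : ℂ) / (1 + f x * a) * ((f x : ℂ) / (1 + f x * b)) ∂μ := by
    rw [← integral_const_mul]
    congr 1 with x
    ring
  set K := ∫ x, a * ((f x : ℂ) / (1 + f x * a)) * (b * ((f x : ℂ) / (1 + f x * b))) ∂μ
  have hK : (y : ℂ) * K = 1 := by
    have ha0 : a ≠ 0 := fun h => by simp [h] at ha
    have hb0 : b ≠ 0 := fun h => by simp [h] at hb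
    have hdiff := congrArg₂ (· - ·) hea heb
    simp only [add_sub_add_left_eq_sub, ← mul_sub,
      integral_ofReal_div_one_add_ofReal_mul_sub hf ha hb, inv_sub_inv ha0 hb0,
      div_eq_iff (mul_ne_zero ha0 hb0)] at hdiff
    apply mul_left_cancel₀ (sub_ne_zero.mpr (Ne.symm hab))
    rw [hK_eq]
    linear_combination -hdiff
  have hK_le : y * ‖K‖ ≤ y * ((∫ x, ‖a * ((f x : ℂ) / (1 + f x * a))‖ ^ 2 ∂μ)
      + ∫ x, ‖b * ((f x : ℂ) / (1 + f x * b))‖ ^ 2 ∂μ) / 2 := by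
    rw [mul_div_assoc]
    exact mul_le_mul_of_nonneg_left (norm_integral_mul_le_half_add
      (integrable_norm_const_mul_ofReal_div_one_add_ofReal_mul_sq hf ha a)
      (integrable_norm_const_mul_ofReal_div_one_add_ofReal_mul_sq hf hb b)) hy.le
  have hK_norm : y * ‖K‖ = 1 := by
    simpa [abs_of_pos hy] using congrArg norm hK
  linarith [mul_integral_norm_mul_ofReal_div_one_add_ofReal_mul_sq_lt_one hf hz ha hea,
    mul_integral_norm_mul_ofReal_div_one_add_ofReal_mul_sq_lt_one hf hz hb heb]

end

theorem uniqueness_of_stieltjes_equation_general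
    (y : ℝ) (hy : 0 < y) (f : ℝ → ℝ)
    (hf_cont : ContinuousOn f (Set.Icc 0 (2 * Real.pi)))
    (s₁ s₂ : ℂ → ℂ)
    (hs₁_map : ∀ z : ℂ, 0 < z.im → 0 < (s₁ z).im)
    (hs₂_map : ∀ z : ℂ, 0 < z.im → 0 < (s₂ z).im)
    (hs₁_eq : ∀ z : ℂ, 0 < z.im →
      (s₁ z)⁻¹ = -z + y * ∫ ω in (0:ℝ)..(2 * Real.pi), (f ω : ℂ) / (1 + (f ω : ℂ) * s₁ z))
    (hs₂_eq : ∀ z : ℂ, 0 < z.im →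
      (s₂ z)⁻¹ = -z + y * ∫ ω in (0:ℝ)..(2 * Real.pi), (f ω : ℂ) / (1 + (f ω : ℂ) * s₂ z)) :
    ∀ z : ℂ, 0 < z.im → s₁ z = s₂ z := by
  intro z hz
  have : IsFiniteMeasure (volume.restrict (Set.Ioc 0 (2 * Real.pi))) :=
    isFiniteMeasure_restrict.mpr measure_Ioc_lt_top.ne
  have hf : AEStronglyMeasurable f (volume.restrict (Set.Ioc 0 (2 * Real.pi))) :=
    (hf_cont.mono Set.Ioc_subset_Icc_self).aestronglyMeasurable measurableSet_Ioc
  simp only [intervalIntegral.integral_of_le Real.two_pi_pos.le] at hs₁_eq hs₂_eq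
  exact eq_of_inv_eq_neg_add_mul_integral hy hf hz (hs₁_map z hz) (hs₂_map z hz)
    (hs₁_eq z hz) (hs₂_eq z hz)

/-- **Uniqueness of the solution of the Stieltjes-transform equation.**
Let `y > 0` and let `f : [0, 2π] → [0, ∞)` be continuous.  Then there is at most
one function `s : ℂ⁺ → ℂ⁺` satisfying
`1 / s(z) = -z + y ∫_0^{2π} f(ω) / (1 + f(ω) s(z)) dω` for all `z ∈ ℂ⁺`. -/
theorem uniqueness_of_stieltjes_equation
    (y : ℝ) (hy : 0 < y) (f : ℝ → ℝ)
    (hf_cont : ContinuousOn f (Set.Icc 0 (2 * Real.pi)))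
    (hf_nonneg : ∀ ω ∈ Set.Icc 0 (2 * Real.pi), 0 ≤ f ω)
    (s₁ s₂ : ℂ → ℂ)
    (hs₁_map : ∀ z : ℂ, 0 < z.im → 0 < (s₁ z).im)
    (hs₂_map : ∀ z : ℂ, 0 < z.im → 0 < (s₂ z).im)
    (hs₁_eq : ∀ z : ℂ, 0 < z.im →
      (s₁ z)⁻¹ = -z + y * ∫ ω in (0:ℝ)..(2 * Real.pi), (f ω : ℂ) / (1 + (f ω : ℂ) * s₁ z))
    (hs₂_eq : ∀ z : ℂ, 0 < z.im →
      (s₂ z)⁻¹ = -z + y * ∫ ω in (0:ℝ)..(2 * Real.pi), (f ω : ℂ) / (1 + (f ω : ℂ) * s₂ z)) :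
    ∀ z : ℂ, 0 < z.im → s₁ z = s₂ z :=
  uniqueness_of_stieltjes_equation_general y hy f hf_cont s₁ s₂ hs₁_map hs₂_map hs₁_eq hs₂_eq
end

section
/- Let \mathbf{X} = (X_{(i-1)n+t})_{it} and \widetilde{\mathbf{X}} = (\widetilde X_{(i-1)n+t})_{it} be the p \times n matrices built from the linear process X_t = \sum_{j=0}^\infty c_j Z_{t-j} and its truncation \widetilde X_t = \sum_{j=0}^{n} c_j Z_{t-j}, and set \Delta := p^{-2} \mathrm{tr}((\mathbf{X}-\widetilde{\mathbf{X}})(\mathbf{X}-\widetilde{\mathbf{X}})^T). Under conditions (Z1) on (Z_t) and |c_j| \le C(j+1)^{-1-\delta} (C, \delta > 0), in the regime p/n \to y \in (0,\infty) one has E[\Delta^2] = O(n^{-2-2\delta}). -/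
/-!
Each entry of `𝐗 - 𝐗̃` is the tail `∑_{j>n} c_j Z_{e-j}` of a linear process. For a finite
sum `S = ∑ aᵢ Zᵢ` of independent centred innovations, expanding `(S + a Z)⁴` and using
independence gives `E S⁴ ≤ 3 σ₄ (∑ aᵢ²)²` by induction, and Fatou's lemma carries this bound
over to the almost surely convergent tail series, whose variance `∑_{j>n} c_j²` is
`O(n^{-1-δ})`. By Cauchy–Schwarz, `tr((𝐗-𝐗̃)(𝐗-𝐗̃)ᵀ)² ≤ pn ∑ (entries)⁴`, hence
`E Δ² ≤ 3 σ₄ (n/p)² (∑_{j>n} c_j²)² = O(n^{-2-2δ})`.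
-/

open MeasureTheory ProbabilityTheory Matrix Filter Topology

lemma abs_pow_le_one_add_abs_pow (x : ℝ) {k n : ℕ} (hkn : k ≤ n) : |x| ^ k ≤ 1 + |x| ^ n := by
  rcases le_or_gt |x| 1 with hx | hx
  · linarith [pow_le_one₀ (abs_nonneg x) hx (n := k), pow_nonneg (abs_nonneg x) n]
  · linarith [pow_le_pow_right₀ hx.le hkn]

section

variable {Ω : Type*} [MeasurableSpace Ω] {μ : Measure Ω}

lemma MeasureTheory.Integrable.pow_of_le [IsFiniteMeasure μ] {X : Ω → ℝ}
    (hX : AEStronglyMeasurable X μ) {n : ℕ} (hXn : Integrable (fun ω => X ω ^ n) μ) {k : ℕ}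
    (hkn : k ≤ n) : Integrable (fun ω => X ω ^ k) μ :=
  ((integrable_const 1).add hXn.norm).mono' (hX.pow k) <| ae_of_all _ fun ω => by
    simpa only [Pi.add_apply, Real.norm_eq_abs, abs_pow] using abs_pow_le_one_add_abs_pow (X ω) hkn

lemma one_le_integral_pow_four [IsProbabilityMeasure μ] {X : Ω → ℝ}
    (hX : AEStronglyMeasurable X μ) (hX4 : Integrable (fun ω => X ω ^ 4) μ)
    (hX2 : ∫ ω, X ω ^ 2 ∂μ = 1) : 1 ≤ ∫ ω, X ω ^ 4 ∂μ := by
  have hX2i := hX4.pow_of_le hX (by norm_num : 2 ≤ 4)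
  have h : 0 ≤ ∫ ω, (X ω ^ 4 - 2 * X ω ^ 2) + 1 ∂μ :=
    integral_nonneg fun ω => show (0 : ℝ) ≤ _ by nlinarith [sq_nonneg (X ω ^ 2 - 1)]
  rw [integral_add (f := fun ω => X ω ^ 4 - 2 * X ω ^ 2) (hX4.sub (hX2i.const_mul 2))
    (integrable_const 1), integral_sub hX4 (hX2i.const_mul 2), integral_const_mul, hX2] at h
  simp only [integral_const, probReal_univ, smul_eq_mul, one_mul] at h
  linarith

namespace ProbabilityTheory.IndepFun

variable [IsFiniteMeasure μ] {X Y : Ω → ℝ} {n : ℕ}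

lemma integrable_pow_mul_pow (hXY : IndepFun X Y μ) (hX : AEStronglyMeasurable X μ)
    (hY : AEStronglyMeasurable Y μ) (hXn : Integrable (fun ω => X ω ^ n) μ)
    (hYn : Integrable (fun ω => Y ω ^ n) μ) {k l : ℕ} (hk : k ≤ n) (hl : l ≤ n) :
    Integrable (fun ω => X ω ^ k * Y ω ^ l) μ :=
  (hXY.comp (measurable_id.pow_const k) (measurable_id.pow_const l)).integrable_mul
    (hXn.pow_of_le hX hk) (hYn.pow_of_le hY hl)

lemma integrable_add_pow (hXY : IndepFun X Y μ) (hX : AEStronglyMeasurable X μ)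
    (hY : AEStronglyMeasurable Y μ) (hXn : Integrable (fun ω => X ω ^ n) μ)
    (hYn : Integrable (fun ω => Y ω ^ n) μ) :
    Integrable (fun ω => (X ω + Y ω) ^ n) μ := by
  simp_rw [add_pow]
  exact integrable_finsetSum _ fun k hk => (hXY.integrable_pow_mul_pow hX hY hXn hYn
    (Finset.mem_range_succ_iff.1 hk) (Nat.sub_le n k)).mul_const _

lemma integral_add_pow (hXY : IndepFun X Y μ) (hX : AEStronglyMeasurable X μ)
    (hY : AEStronglyMeasurable Y μ) (hXn : Integrable (fun ω => X ω ^ n) μ)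
    (hYn : Integrable (fun ω => Y ω ^ n) μ) :
    ∫ ω, (X ω + Y ω) ^ n ∂μ =
      ∑ k ∈ Finset.range (n + 1), (∫ ω, X ω ^ k ∂μ) * (∫ ω, Y ω ^ (n - k) ∂μ) * n.choose k := by
  simp_rw [add_pow]
  rw [integral_finsetSum _ fun k hk => (hXY.integrable_pow_mul_pow hX hY hXn hYn
    (Finset.mem_range_succ_iff.1 hk) (Nat.sub_le n k)).mul_const _]
  refine Finset.sum_congr rfl fun k _ => ?_
  rw [integral_mul_const]
  congr 1
  exact (hXY.comp (measurable_id.pow_const k)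
    (measurable_id.pow_const (n - k))).integral_fun_mul_eq_mul_integral (hX.pow k) (hY.pow _)

variable [IsProbabilityMeasure μ]

lemma integral_add_sq (hXY : IndepFun X Y μ) (hX : AEStronglyMeasurable X μ)
    (hY : AEStronglyMeasurable Y μ) (hX2 : Integrable (fun ω => X ω ^ 2) μ)
    (hY2 : Integrable (fun ω => Y ω ^ 2) μ) (hX0 : ∫ ω, X ω ∂μ = 0) :
    ∫ ω, (X ω + Y ω) ^ 2 ∂μ = ∫ ω, X ω ^ 2 ∂μ + ∫ ω, Y ω ^ 2 ∂μ := by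
  rw [hXY.integral_add_pow hX hY hX2 hY2]
  simp [Finset.sum_range_succ, hX0]
  ring

lemma integral_add_pow_four (hXY : IndepFun X Y μ) (hX : AEStronglyMeasurable X μ)
    (hY : AEStronglyMeasurable Y μ) (hX4 : Integrable (fun ω => X ω ^ 4) μ)
    (hY4 : Integrable (fun ω => Y ω ^ 4) μ) (hX0 : ∫ ω, X ω ∂μ = 0) (hY0 : ∫ ω, Y ω ∂μ = 0) :
    ∫ ω, (X ω + Y ω) ^ 4 ∂μ =
      ∫ ω, X ω ^ 4 ∂μ + 6 * (∫ ω, X ω ^ 2 ∂μ) * ∫ ω, Y ω ^ 2 ∂μ + ∫ ω, Y ω ^ 4 ∂μ := by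
  rw [hXY.integral_add_pow hX hY hX4 hY4]
  simp [Finset.sum_range_succ, hX0, hY0, Nat.choose]
  ring

end ProbabilityTheory.IndepFun

/-- Condition (Z1) on the innovations, with `σ4` bounding the fourth moments. -/
structure IsStandardIndepFamily {ι : Type*} (Z : ι → Ω → ℝ) (σ4 : ℝ) (μ : Measure Ω) : Prop where
  measurable : ∀ i, Measurable (Z i)
  indep : iIndepFun Z μ
  integral_eq_zero : ∀ i, ∫ ω, Z i ω ∂μ = 0
  integral_sq : ∀ i, ∫ ω, Z i ω ^ 2 ∂μ = 1
  integrable_pow_four : ∀ i, Integrable (fun ω => Z i ω ^ 4) μ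
  integral_pow_four_le : ∀ i, ∫ ω, Z i ω ^ 4 ∂μ ≤ σ4

namespace IsStandardIndepFamily

variable {ι κ : Type*} {Z : ι → Ω → ℝ} {σ4 : ℝ}

lemma comp_injective (hZ : IsStandardIndepFamily Z σ4 μ) {g : κ → ι}
    (hg : Function.Injective g) : IsStandardIndepFamily (fun k => Z (g k)) σ4 μ where
  measurable k := hZ.measurable (g k)
  indep := hZ.indep.precomp hg
  integral_eq_zero k := hZ.integral_eq_zero (g k)
  integral_sq k := hZ.integral_sq (g k)
  integrable_pow_four k := hZ.integrable_pow_four (g k)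
  integral_pow_four_le k := hZ.integral_pow_four_le (g k)

variable [IsProbabilityMeasure μ]

lemma one_le (hZ : IsStandardIndepFamily Z σ4 μ) (i : ι) : 1 ≤ σ4 :=
  (one_le_integral_pow_four (hZ.measurable i).aestronglyMeasurable (hZ.integrable_pow_four i)
    (hZ.integral_sq i)).trans (hZ.integral_pow_four_le i)

lemma integrable_pow (hZ : IsStandardIndepFamily Z σ4 μ) (i : ι) {k : ℕ} (hk : k ≤ 4) :
    Integrable (fun ω => Z i ω ^ k) μ :=
  (hZ.integrable_pow_four i).pow_of_le (hZ.measurable i).aestronglyMeasurable hk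

lemma integrable (hZ : IsStandardIndepFamily Z σ4 μ) (i : ι) : Integrable (Z i) μ := by
  simpa using hZ.integrable_pow i (k := 1) (by norm_num)

lemma moments_finset_sum (hZ : IsStandardIndepFamily Z σ4 μ) (a : ι → ℝ) (s : Finset ι) :
    Integrable (fun ω => (∑ i ∈ s, a i * Z i ω) ^ 4) μ ∧
      ∫ ω, (∑ i ∈ s, a i * Z i ω) ^ 2 ∂μ = ∑ i ∈ s, a i ^ 2 ∧
      ∫ ω, (∑ i ∈ s, a i * Z i ω) ^ 4 ∂μ ≤ 3 * σ4 * (∑ i ∈ s, a i ^ 2) ^ 2 := by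
  classical
  induction s using Finset.induction_on with
  | empty => simp
  | insert i s hi ih =>
    obtain ⟨hS4, hS2, hS4le⟩ := ih
    set S := fun ω => ∑ j ∈ s, a j * Z j ω
    have hW : ∀ j, Measurable fun ω => a j * Z j ω := fun j => (hZ.measurable j).const_mul _
    have hS : AEStronglyMeasurable S μ :=
      (Finset.measurable_fun_sum s fun j _ => hW j).aestronglyMeasurable
    have hind : IndepFun (fun ω => a i * Z i ω) S μ := by
      have hsum : S = ∑ j ∈ s, fun ω => a j * Z j ω := by ext ω; simp [S]
      rw [hsum]
      exact ((hZ.indep.comp (fun j x => a j * x) fun j => measurable_const_mul _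
        ).indepFun_finsetSum_of_notMem hW hi).symm
    have hS0 : ∫ ω, S ω ∂μ = 0 := by
      rw [integral_finsetSum _ fun j _ => (hZ.integrable j).const_mul _]
      simp [integral_const_mul, hZ.integral_eq_zero]
    have hY0 : ∫ ω, a i * Z i ω ∂μ = 0 := by rw [integral_const_mul, hZ.integral_eq_zero, mul_zero]
    have hY2 : ∫ ω, (a i * Z i ω) ^ 2 ∂μ = a i ^ 2 := by
      simp_rw [mul_pow]; rw [integral_const_mul, hZ.integral_sq, mul_one]
    have hY4i : Integrable (fun ω => (a i * Z i ω) ^ 4) μ := by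
      simp_rw [mul_pow]; exact (hZ.integrable_pow_four i).const_mul _
    have hY4 : ∫ ω, (a i * Z i ω) ^ 4 ∂μ ≤ σ4 * (a i ^ 2) ^ 2 := by
      simp_rw [mul_pow]
      rw [integral_const_mul]
      nlinarith [hZ.integral_pow_four_le i, pow_nonneg (sq_nonneg (a i)) 2]
    have hY : AEStronglyMeasurable (fun ω => a i * Z i ω) μ := (hW i).aestronglyMeasurable
    have hS2i := hS4.pow_of_le hS (by norm_num : 2 ≤ 4)
    simp only [Finset.sum_insert hi]
    refine ⟨hind.integrable_add_pow hY hS hY4i hS4, ?_, ?_⟩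
    · rw [hind.integral_add_sq hY hS (hY4i.pow_of_le hY (by norm_num)) hS2i hY0, hY2, hS2]
    · have hσ := hZ.one_le i
      have hV : 0 ≤ ∑ j ∈ s, a j ^ 2 := Finset.sum_nonneg fun j _ => sq_nonneg _
      rw [hind.integral_add_pow_four hY hS hY4i hS4 hY0 hS0, hY2, hS2]
      -- the cross term `6 V a²` is absorbed into `6 σ₄ V a²` because `1 ≤ σ₄`
      nlinarith [mul_nonneg (mul_nonneg hV (sq_nonneg (a i))) (sub_nonneg.2 hσ),
        mul_nonneg (pow_nonneg (sq_nonneg (a i)) 2) (sub_nonneg.2 hσ)]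

end IsStandardIndepFamily

lemma integrable_and_integral_le_of_tendsto_ae {F : ℕ → Ω → ℝ} {f : Ω → ℝ} {B : ℝ}
    (hF : ∀ m, Integrable (F m) μ) (hF0 : ∀ m, 0 ≤ᵐ[μ] F m)
    (hlim : ∀ᵐ ω ∂μ, Tendsto (fun m => F m ω) atTop (𝓝 (f ω)))
    (hB : ∀ m, ∫ ω, F m ω ∂μ ≤ B) : Integrable f μ ∧ ∫ ω, f ω ∂μ ≤ B := by
  have hf : AEStronglyMeasurable f μ :=
    aestronglyMeasurable_of_tendsto_ae atTop (fun m => (hF m).1) hlim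
  have hf0 : 0 ≤ᵐ[μ] f := by
    filter_upwards [hlim, ae_all_iff.2 hF0] with ω hω hω0 using ge_of_tendsto' hω hω0
  have hfatou : ∫⁻ ω, ENNReal.ofReal (f ω) ∂μ ≤ ENNReal.ofReal B :=
    calc ∫⁻ ω, ENNReal.ofReal (f ω) ∂μ
        = ∫⁻ ω, liminf (fun m => ENNReal.ofReal (F m ω)) atTop ∂μ := by
          refine lintegral_congr_ae ?_
          filter_upwards [hlim] with ω hω using ((ENNReal.tendsto_ofReal hω).liminf_eq).symm
      _ ≤ liminf (fun m => ∫⁻ ω, ENNReal.ofReal (F m ω) ∂μ) atTop :=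
          lintegral_liminf_le' fun m => (hF m).1.aemeasurable.ennreal_ofReal
      _ ≤ ENNReal.ofReal B := liminf_le_of_frequently_le' <| Frequently.of_forall fun m => by
          rw [← ofReal_integral_eq_lintegral_ofReal (hF m) (hF0 m)]
          exact ENNReal.ofReal_le_ofReal (hB m)
  have hB0 : 0 ≤ B := (integral_nonneg_of_ae (hF0 0)).trans (hB 0)
  refine ⟨⟨hf, (hasFiniteIntegral_iff_ofReal hf0).2 (hfatou.trans_lt ENNReal.ofReal_lt_top)⟩, ?_⟩
  rw [integral_eq_lintegral_of_nonneg_ae hf0 hf]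
  exact ENNReal.toReal_le_of_le_ofReal hB0 hfatou

namespace IsStandardIndepFamily

variable {ι : Type*} {Z : ι → Ω → ℝ} {σ4 : ℝ} [IsProbabilityMeasure μ]

lemma eLpNorm_one_le (hZ : IsStandardIndepFamily Z σ4 μ) (i : ι) : eLpNorm (Z i) 1 μ ≤ 2 := by
  rw [eLpNorm_one_eq_lintegral_enorm, ← ofReal_integral_norm_eq_lintegral_enorm (hZ.integrable i),
    ← ENNReal.ofReal_ofNat]
  refine ENNReal.ofReal_le_ofReal ?_
  calc ∫ ω, ‖Z i ω‖ ∂μ ≤ ∫ ω, 1 + Z i ω ^ 2 ∂μ :=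
        integral_mono (hZ.integrable i).norm ((integrable_const 1).add (hZ.integrable_pow i
          (by norm_num))) fun ω => by
          simpa [Real.norm_eq_abs] using abs_pow_le_one_add_abs_pow (Z i ω) (by norm_num : 1 ≤ 2)
    _ = 2 := by
        rw [integral_add (integrable_const 1) (hZ.integrable_pow i (by norm_num)), hZ.integral_sq]
        norm_num

lemma ae_summable_mul [Countable ι] (hZ : IsStandardIndepFamily Z σ4 μ) {a : ι → ℝ}
    (ha : Summable fun i => |a i|) : ∀ᵐ ω ∂μ, Summable fun i => a i * Z i ω := by
  have hnorm : ∑' i, eLpNorm (fun ω => a i * Z i ω) 1 μ ≠ ⊤ := by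
    refine ne_top_of_le_ne_top ?_ (ENNReal.tsum_le_tsum fun i =>
      (eLpNorm_const_smul_le (c := a i) (f := Z i)).trans
        (mul_le_mul_right (hZ.eLpNorm_one_le i) _))
    rw [ENNReal.tsum_mul_right]
    exact ENNReal.mul_ne_top (tsum_enorm_ne_top_iff_summable_norm.2 ha) ENNReal.ofNat_ne_top
  filter_upwards [summable_norm_of_tsum_eLpNorm_ne_top le_rfl
    (fun i => ((hZ.measurable i).const_mul (a i)).aestronglyMeasurable) hnorm] with ω hω
  exact hω.of_norm

lemma moments_tsum {Z : ℕ → Ω → ℝ} (hZ : IsStandardIndepFamily Z σ4 μ) {a : ℕ → ℝ}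
    (hsum : ∀ᵐ ω ∂μ, Summable fun j => a j * Z j ω) (ha : Summable fun j => a j ^ 2) :
    Integrable (fun ω => (∑' j, a j * Z j ω) ^ 4) μ ∧
      ∫ ω, (∑' j, a j * Z j ω) ^ 4 ∂μ ≤ 3 * σ4 * (∑' j, a j ^ 2) ^ 2 := by
  refine integrable_and_integral_le_of_tendsto_ae
    (fun m => (hZ.moments_finset_sum a (Finset.range m)).1)
    (fun m => ae_of_all _ fun ω => by positivity) ?_ fun m => ?_
  · filter_upwards [hsum] with ω hω using hω.hasSum.tendsto_sum_nat.pow 4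
  · refine (hZ.moments_finset_sum a (Finset.range m)).2.2.trans ?_
    have hσ : 1 ≤ σ4 := hZ.one_le 0
    gcongr
    exact ha.sum_le_tsum _ fun j _ => sq_nonneg _

lemma moments_tsum_sub_sum {Z : ℕ → Ω → ℝ} (hZ : IsStandardIndepFamily Z σ4 μ) {a : ℕ → ℝ}
    (ha : Summable fun j => |a j|) (ha2 : Summable fun j => a j ^ 2) (N : ℕ) :
    Integrable (fun ω => (∑' j, a j * Z j ω - ∑ j ∈ Finset.range N, a j * Z j ω) ^ 4) μ ∧
      ∫ ω, (∑' j, a j * Z j ω - ∑ j ∈ Finset.range N, a j * Z j ω) ^ 4 ∂μ ≤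
        3 * σ4 * (∑' j, a (j + N) ^ 2) ^ 2 := by
  have hsum := hZ.ae_summable_mul ha
  have htail : (fun ω => (∑' j, a j * Z j ω - ∑ j ∈ Finset.range N, a j * Z j ω) ^ 4) =ᵐ[μ]
      fun ω => (∑' j, a (j + N) * Z (j + N) ω) ^ 4 := by
    filter_upwards [hsum] with ω hω
    rw [← hω.sum_add_tsum_nat_add N, add_sub_cancel_left]
  obtain ⟨hint, hle⟩ := (hZ.comp_injective (add_left_injective N)).moments_tsum
    (a := fun j => a (j + N))
    (by filter_upwards [hsum] with ω hω using (summable_nat_add_iff N).2 hω)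
    ((summable_nat_add_iff N).2 ha2)
  exact ⟨hint.congr htail.symm, (integral_congr_ae htail).trans_le hle⟩

end IsStandardIndepFamily

lemma Matrix.trace_mul_transpose_self {m n : Type*} [Fintype m] [Fintype n] (A : Matrix m n ℝ) :
    trace (A * Aᵀ) = ∑ i, ∑ j, A i j ^ 2 := by
  simp [trace, mul_apply, sq]

lemma Matrix.sq_trace_mul_transpose_self_le {m n : Type*} [Fintype m] [Fintype n]
    (A : Matrix m n ℝ) :
    trace (A * Aᵀ) ^ 2 ≤ (Fintype.card m * Fintype.card n) * ∑ i, ∑ j, A i j ^ 4 := by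
  have h := sq_sum_le_card_mul_sum_sq (s := Finset.univ) (f := fun ij : m × n => A ij.1 ij.2 ^ 2)
  simp only [Finset.card_univ, Fintype.card_prod, Nat.cast_mul, ← pow_mul,
    Fintype.sum_prod_type] at h
  rwa [trace_mul_transpose_self]

lemma integral_sq_trace_mul_transpose_self_le {m n : Type*} [Fintype m] [Fintype n]
    (A : Ω → Matrix m n ℝ) {B : ℝ} (hA : ∀ i j, Integrable (fun ω => A ω i j ^ 4) μ)
    (hB : ∀ i j, ∫ ω, A ω i j ^ 4 ∂μ ≤ B) :
    ∫ ω, trace (A ω * (A ω)ᵀ) ^ 2 ∂μ ≤ (Fintype.card m * Fintype.card n) ^ 2 * B := by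
  set k : ℝ := Fintype.card m * Fintype.card n
  have hsum : Integrable (fun ω => ∑ i, ∑ j, A ω i j ^ 4) μ :=
    integrable_finsetSum _ fun i _ => integrable_finsetSum _ fun j _ => hA i j
  calc ∫ ω, trace (A ω * (A ω)ᵀ) ^ 2 ∂μ ≤ ∫ ω, k * ∑ i, ∑ j, A ω i j ^ 4 ∂μ :=
        integral_mono_of_nonneg (ae_of_all _ fun ω => sq_nonneg _) (hsum.const_mul k)
          (ae_of_all _ fun ω => (A ω).sq_trace_mul_transpose_self_le)
    _ = k * ∑ i, ∑ j, ∫ ω, A ω i j ^ 4 ∂μ := by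
        rw [integral_const_mul, integral_finsetSum _ fun i _ =>
          integrable_finsetSum _ fun j _ => hA i j]
        simp_rw [integral_finsetSum _ fun j _ => hA _ j]
    _ ≤ k * ∑ _i : m, ∑ _j : n, B := by gcongr with i _ j _; exact hB i j
    _ = k ^ 2 * B := by simp [k]; ring

lemma integral_sq_inv_sq_mul_trace_mul_transpose_self_le {p n : ℕ}
    (A : Ω → Matrix (Fin p) (Fin n) ℝ) {B : ℝ} (hA : ∀ i j, Integrable (fun ω => A ω i j ^ 4) μ)
    (hB : ∀ i j, ∫ ω, A ω i j ^ 4 ∂μ ≤ B) :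
    ∫ ω, (((p : ℝ) ^ 2)⁻¹ * trace (A ω * (A ω)ᵀ)) ^ 2 ∂μ ≤ ((n : ℝ) / p) ^ 2 * B := by
  have hscale : (((p : ℝ) ^ 2)⁻¹) ^ 2 * ((p : ℝ) * n) ^ 2 = ((n : ℝ) / p) ^ 2 := by
    rcases eq_or_ne (p : ℝ) 0 with h | h
    · simp [h]
    · field_simp
  simp_rw [mul_pow]
  rw [integral_const_mul, ← hscale, mul_assoc]
  gcongr
  simpa using integral_sq_trace_mul_transpose_self_le A hA hB

section Coefficients

variable {c : ℕ → ℝ} {C s : ℝ}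

lemma summable_add_one_rpow_neg (hs : 1 < s) : Summable fun j : ℕ => ((j : ℝ) + 1) ^ (-s) :=
  ((summable_nat_add_iff 1).2 (Real.summable_nat_rpow (p := -s) |>.2 (by linarith))).congr
    fun j => by push_cast; rfl

lemma sq_add_le_of_abs_le_rpow (hs : 0 ≤ s) (hc : ∀ j : ℕ, |c j| ≤ C * ((j : ℝ) + 1) ^ (-s))
    (N j : ℕ) : c (j + N) ^ 2 ≤ C ^ 2 * ((N : ℝ) + 1) ^ (-s) * ((j : ℝ) + 1) ^ (-s) := by
  have hjN : ((j + N : ℕ) : ℝ) + 1 = (j : ℝ) + N + 1 := by push_cast; ring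
  have h := pow_le_pow_left₀ (abs_nonneg _) (hc (j + N)) 2
  rw [sq_abs, hjN] at h
  have hN : ((j : ℝ) + N + 1) ^ (-s) ≤ ((N : ℝ) + 1) ^ (-s) :=
    Real.rpow_le_rpow_of_nonpos (by positivity) (by linarith [(j.cast_nonneg : (0 : ℝ) ≤ j)])
      (by linarith)
  have hj : ((j : ℝ) + N + 1) ^ (-s) ≤ ((j : ℝ) + 1) ^ (-s) :=
    Real.rpow_le_rpow_of_nonpos (by positivity) (by linarith [(N.cast_nonneg : (0 : ℝ) ≤ N)])
      (by linarith)
  calc c (j + N) ^ 2 ≤ C ^ 2 * (((j : ℝ) + N + 1) ^ (-s) * ((j : ℝ) + N + 1) ^ (-s)) := by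
        linarith
    _ ≤ C ^ 2 * (((N : ℝ) + 1) ^ (-s) * ((j : ℝ) + 1) ^ (-s)) := by gcongr
    _ = _ := by ring

lemma summable_abs_of_abs_le_rpow (hs : 1 < s) (hc : ∀ j : ℕ, |c j| ≤ C * ((j : ℝ) + 1) ^ (-s)) :
    Summable fun j => |c j| :=
  ((summable_add_one_rpow_neg hs).mul_left C).of_nonneg_of_le (fun _ => abs_nonneg _) hc

lemma summable_sq_add_of_abs_le_rpow (hs : 1 < s)
    (hc : ∀ j : ℕ, |c j| ≤ C * ((j : ℝ) + 1) ^ (-s)) (N : ℕ) :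
    Summable fun j => c (j + N) ^ 2 :=
  ((summable_add_one_rpow_neg hs).mul_left _).of_nonneg_of_le (fun _ => sq_nonneg _)
    (sq_add_le_of_abs_le_rpow (by linarith) hc N)

lemma tsum_sq_add_le_of_abs_le_rpow (hs : 1 < s)
    (hc : ∀ j : ℕ, |c j| ≤ C * ((j : ℝ) + 1) ^ (-s)) (N : ℕ) :
    ∑' j, c (j + N) ^ 2 ≤ C ^ 2 * (∑' j : ℕ, ((j : ℝ) + 1) ^ (-s)) * ((N : ℝ) + 1) ^ (-s) := by
  rw [mul_right_comm, ← tsum_mul_left]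
  exact (summable_sq_add_of_abs_le_rpow hs hc N).tsum_le_tsum
    (sq_add_le_of_abs_le_rpow (by linarith) hc N) ((summable_add_one_rpow_neg hs).mul_left _)

lemma sq_tsum_sq_add_succ_le_of_abs_le_rpow (hs : 1 < s)
    (hc : ∀ j : ℕ, |c j| ≤ C * ((j : ℝ) + 1) ^ (-s)) {n : ℕ} (hn : 0 < n) :
    (∑' j, c (j + (n + 1)) ^ 2) ^ 2 ≤
      (C ^ 2 * ∑' j : ℕ, ((j : ℝ) + 1) ^ (-s)) ^ 2 * (n : ℝ) ^ (-(2 * s)) := by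
  have hV : ∑' j, c (j + (n + 1)) ^ 2 ≤ C ^ 2 * (∑' j : ℕ, ((j : ℝ) + 1) ^ (-s)) * (n : ℝ) ^ (-s) :=
    (tsum_sq_add_le_of_abs_le_rpow hs hc (n + 1)).trans <| mul_le_mul_of_nonneg_left
      (Real.rpow_le_rpow_of_nonpos (by exact_mod_cast hn) (by push_cast; linarith) (by linarith))
      (mul_nonneg (sq_nonneg C) (tsum_nonneg fun j => by positivity))
  have hrpow : (n : ℝ) ^ (-(2 * s)) = ((n : ℝ) ^ (-s)) ^ 2 := by
    rw [← Real.rpow_natCast, ← Real.rpow_mul n.cast_nonneg]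
    ring_nf
  rw [hrpow, ← mul_pow]
  exact pow_le_pow_left₀ (tsum_nonneg fun _ => sq_nonneg _) hV 2

end Coefficients

end

theorem truncation_error_second_moment_general
    {ΩS : Type*} [MeasureSpace ΩS] [IsProbabilityMeasure (ℙ : Measure ΩS)]
    (Z : ℤ → ΩS → ℝ) (hZmeas : ∀ t, Measurable (Z t))
    (hZindep : iIndepFun Z ℙ)
    -- condition (Z1)
    (hZmean : ∀ t, ∫ ω, Z t ω = 0) (hZvar : ∀ t, ∫ ω, (Z t ω) ^ 2 = 1)
    (σ4 : ℝ) (hZ4int : ∀ t, Integrable (fun ω => (Z t ω) ^ 4))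
    (hσ4 : ∀ t, ∫ ω, (Z t ω) ^ 4 ≤ σ4)
    -- coefficient decay
    (c : ℕ → ℝ) (C δ : ℝ) (hδ : 0 < δ)
    (hc : ∀ j : ℕ, |c j| ≤ C * ((j : ℝ) + 1) ^ (-(1 + δ)))
    -- aspect ratio
    (p : ℕ → ℕ) (y : ℝ) (hy : 0 < y)
    (hpn : Tendsto (fun n => (p n : ℝ) / (n : ℝ)) atTop (𝓝 y))
    -- the matrices 𝐗 and 𝐗̃
    (M Mt : (n : ℕ) → ΩS → Matrix (Fin (p n)) (Fin n) ℝ)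
    (hM : ∀ n ω i t, M n ω i t = ∑' j : ℕ, c j * Z ((i : ℤ) * n + (t : ℤ) + 1 - (j : ℤ)) ω)
    (hMt : ∀ n ω i t, Mt n ω i t =
      ∑ j ∈ Finset.range (n + 1), c j * Z ((i : ℤ) * n + (t : ℤ) + 1 - (j : ℤ)) ω) :
    ∃ K : ℝ, ∀ n : ℕ,
      (∫ ω, (((p n : ℝ) ^ 2)⁻¹ *
          Matrix.trace ((M n ω - Mt n ω) * (M n ω - Mt n ω)ᵀ)) ^ 2)
        ≤ K * (n : ℝ) ^ (-(2 + 2 * δ)) := by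
  have hs : 1 < 1 + δ := by linarith
  have hZ : IsStandardIndepFamily Z σ4 ℙ := ⟨hZmeas, hZindep, hZmean, hZvar, hZ4int, hσ4⟩
  have hσ : 1 ≤ σ4 := hZ.one_le 0
  obtain ⟨A, hA⟩ : BddAbove (Set.range fun n : ℕ => ((n : ℝ) / p n) ^ 2) :=
    (((hpn.inv₀ hy.ne').congr fun n => inv_div _ _).pow 2).bddAbove_range
  have hA0 : 0 ≤ A := (sq_nonneg _).trans (hA (Set.mem_range_self 0))
  set S := ∑' j : ℕ, ((j : ℝ) + 1) ^ (-(1 + δ))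
  refine ⟨A * (3 * σ4 * (C ^ 2 * S) ^ 2), fun n => ?_⟩
  rcases n.eq_zero_or_pos with rfl | hn
  · rw [Nat.cast_zero, Real.zero_rpow (by linarith), mul_zero]
    simp [trace]
  set V := ∑' j, c (j + (n + 1)) ^ 2
  have hentry : ∀ i t, Integrable (fun ω => (M n ω - Mt n ω) i t ^ 4) ∧
      ∫ ω, (M n ω - Mt n ω) i t ^ 4 ≤ 3 * σ4 * V ^ 2 := by
    intro i t
    simp only [Matrix.sub_apply, hM, hMt]
    exact (hZ.comp_injective ((sub_right_injective (b := (i : ℤ) * n + t + 1)).comp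
      Nat.cast_injective)).moments_tsum_sub_sum (summable_abs_of_abs_le_rpow hs hc)
      (by simpa using summable_sq_add_of_abs_le_rpow hs hc 0) (n + 1)
  calc _ ≤ ((n : ℝ) / p n) ^ 2 * (3 * σ4 * V ^ 2) :=
        integral_sq_inv_sq_mul_trace_mul_transpose_self_le (fun ω => M n ω - Mt n ω)
          (fun i t => (hentry i t).1) (fun i t => (hentry i t).2)
    _ ≤ A * (3 * σ4 * ((C ^ 2 * S) ^ 2 * (n : ℝ) ^ (-(2 * (1 + δ))))) := by
        gcongr
        · exact hA (Set.mem_range_self n)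
        · exact sq_tsum_sq_add_succ_le_of_abs_le_rpow hs hc hn
    _ = A * (3 * σ4 * (C ^ 2 * S) ^ 2) * (n : ℝ) ^ (-(2 + 2 * δ)) := by ring_nf

/-- **Second moment of the truncation error.** With
`Δ = p⁻² tr((𝐗 - 𝐗̃)(𝐗 - 𝐗̃)ᵀ)`, under (Z1) and the polynomial decay of the coefficients,
in the regime `p/n → y ∈ (0,∞)` one has `E[Δ²] = O(n^{-2-2δ})`. -/
theorem truncation_error_second_moment
    {ΩS : Type*} [MeasureSpace ΩS] [IsProbabilityMeasure (ℙ : Measure ΩS)]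
    (Z : ℤ → ΩS → ℝ) (hZmeas : ∀ t, Measurable (Z t))
    (hZindep : iIndepFun Z ℙ)
    -- condition (Z1)
    (hZmean : ∀ t, ∫ ω, Z t ω = 0) (hZvar : ∀ t, ∫ ω, (Z t ω) ^ 2 = 1)
    (σ4 : ℝ) (hZ4int : ∀ t, Integrable (fun ω => (Z t ω) ^ 4))
    (hσ4 : ∀ t, ∫ ω, (Z t ω) ^ 4 ≤ σ4)
    -- coefficient decay
    (c : ℕ → ℝ) (C δ : ℝ) (hC : 0 < C) (hδ : 0 < δ)
    (hc : ∀ j : ℕ, |c j| ≤ C * ((j : ℝ) + 1) ^ (-(1 + δ)))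
    -- aspect ratio
    (p : ℕ → ℕ) (y : ℝ) (hy : 0 < y)
    (hpn : Tendsto (fun n => (p n : ℝ) / (n : ℝ)) atTop (𝓝 y))
    -- the matrices 𝐗 and 𝐗̃
    (M Mt : (n : ℕ) → ΩS → Matrix (Fin (p n)) (Fin n) ℝ)
    (hM : ∀ n ω i t, M n ω i t = ∑' j : ℕ, c j * Z ((i : ℤ) * n + (t : ℤ) + 1 - (j : ℤ)) ω)
    (hMt : ∀ n ω i t, Mt n ω i t =
      ∑ j ∈ Finset.range (n + 1), c j * Z ((i : ℤ) * n + (t : ℤ) + 1 - (j : ℤ)) ω) :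
    ∃ K : ℝ, ∀ n : ℕ,
      (∫ ω, (((p n : ℝ) ^ 2)⁻¹ *
          Matrix.trace ((M n ω - Mt n ω) * (M n ω - Mt n ω)ᵀ)) ^ 2)
        ≤ K * (n : ℝ) ^ (-(2 + 2 * δ)) :=
  truncation_error_second_moment_general Z hZmeas hZindep hZmean hZvar σ4 hZ4int hσ4 c C δ hδ hc p y
    hy hpn M Mt hM hMt
end

section
/- Let \widetilde X_t = \sum_{j=0}^{n} c_j Z_{t-j} and \widetilde{\mathbf{X}} = (\widetilde X_{(i-1)n+t})_{i=1..p, t=1..n}. Let \mathbf{Z} = (Z_{(i-2)n+t})_{i=1..p+1, t=1..n} \in \mathbb{R}^{(p+1)\times n}. Then \widetilde{\mathbf{X}} = [0\;\; \mathbf{1}_p\;\; \mathbf{1}_p\;\; 0] \cdot \mathrm{diag}(\mathbf{Z}, \mathbf{Z}) \cdot [\chi_n(K_n^T) ; \bar\chi_n(K_n)], where the left factor is the p \times 2(p+1) block matrix [0, \mathbf{1}_p, \mathbf{1}_p, 0] (blocks of widths 1, p, p, 1), the middle factor is the 2(p+1) \times 2n block-diagonal matrix with two copies of \mathbf{Z},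 and the right factor is the 2n \times n matrix obtained by stacking \chi_n(K_n^T) on top of \bar\chi_n(K_n). -/
open Matrix

/-!
Entry `(i, t)` of `𝐗̃` is `∑_{j ≤ n} c_j Z_{in+t+1-j}`. The terms with `j ≤ t` only reach block
row `i + 1` of `𝐙` and are picked up by the upper triangular Toeplitz matrix `χ_n(K_nᵀ)`; the terms
with `j > t` reach back into block row `i`, and `χ̄_n(K_n)` collects them after the reflection
`j ↦ n - j`.
-/

/-- The `m × m` shift matrix `K_m`, with ones on the subdiagonal. -/
def Kmat (m : ℕ) : Matrix (Fin m) (Fin m) ℝ :=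
  Matrix.of fun i j => if (i : ℕ) = (j : ℕ) + 1 then 1 else 0

/-- `χ_m(K_mᵀ) = ∑_{j=0}^m c_j (K_mᵀ)^j`. -/
noncomputable def chiK (c : ℕ → ℝ) (m : ℕ) : Matrix (Fin m) (Fin m) ℝ :=
  ∑ j ∈ Finset.range (m + 1), c j • ((Kmat m)ᵀ) ^ j

/-- `χ̄_m(K_m) = ∑_{j=0}^m c_{m-j} (K_m)^j`. -/
noncomputable def chibarK (c : ℕ → ℝ) (m : ℕ) : Matrix (Fin m) (Fin m) ℝ :=
  ∑ j ∈ Finset.range (m + 1), c (m - j) • (Kmat m) ^ j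

theorem of_ite_val_eq_succ_mul {R ι : Type*} [NonAssocSemiring R] {p : ℕ}
    (M : Matrix (Fin (p + 1)) ι R) :
    (of fun (i : Fin p) (j : Fin (p + 1)) => if (j : ℕ) = (i : ℕ) + 1 then (1 : R) else 0) * M =
      M.submatrix Fin.succ id := by
  ext i k
  simp [mul_apply, ← Fin.val_succ, Fin.val_inj]

theorem of_ite_val_eq_castSucc_mul {R ι : Type*} [NonAssocSemiring R] {p : ℕ}
    (M : Matrix (Fin (p + 1)) ι R) :
    (of fun (i : Fin p) (j : Fin (p + 1)) => if (j : ℕ) = (i : ℕ) then (1 : R) else 0) * M =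
      M.submatrix Fin.castSucc id := by
  ext i k
  have hj : ∀ j : Fin (p + 1), (j : ℕ) = i ↔ j = i.castSucc := by simp [Fin.ext_iff]
  simp [mul_apply, hj]

namespace Kmat

variable {m : ℕ}

theorem pow_apply (j : ℕ) (a b : Fin m) :
    (Kmat m ^ j) a b = if (a : ℕ) = b + j then 1 else 0 := by
  induction j generalizing a b with
  | zero => simp [one_apply, Fin.ext_iff]
  | succ j ih =>
    rw [pow_succ, mul_apply]
    by_cases hb : (b : ℕ) + 1 < m
    · rw [Finset.sum_eq_single ⟨b + 1, hb⟩]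
      · rw [ih]
        simp [Kmat, add_assoc, add_comm 1 j]
      · intro k _ hk
        simp [Kmat, Fin.ext_iff.not.mp hk]
      · simp
    · have : (a : ℕ) ≠ b + (j + 1) := by omega
      simp only [Kmat, of_apply, this, if_false]
      exact Finset.sum_eq_zero fun k _ => by simp [show (k : ℕ) ≠ b + 1 by omega]

theorem vecMul_pow_apply (v : Fin m → ℝ) (j : ℕ) (t : Fin m) :
    (v ᵥ* Kmat m ^ j) t = if h : t + j < m then v ⟨t + j, h⟩ else 0 := by
  simp only [vecMul, dotProduct, pow_apply, mul_ite, mul_one, mul_zero]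
  split_ifs with h
  · have hx : ∀ x : Fin m, (x : ℕ) = t + j ↔ x = ⟨t + j, h⟩ := fun x => by simp [Fin.ext_iff]
    simp only [hx, Finset.sum_ite_eq', Finset.mem_univ, if_true]
  · exact Finset.sum_eq_zero fun a _ => if_neg (by omega)

theorem vecMul_transpose_pow_apply (v : Fin m → ℝ) (j : ℕ) (t : Fin m) :
    (v ᵥ* (Kmat m)ᵀ ^ j) t = if h : j ≤ t then v ⟨t - j, by omega⟩ else 0 := by
  rw [← transpose_pow, vecMul_transpose]
  simp only [mulVec, dotProduct, pow_apply, ite_mul, one_mul, zero_mul]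
  split_ifs with h
  · have hx : ∀ x : Fin m, (t : ℕ) = x + j ↔ x = ⟨t - j, by omega⟩ := fun x => by
      simp [Fin.ext_iff]; omega
    simp only [hx, Finset.sum_ite_eq', Finset.mem_univ, if_true]
  · exact Finset.sum_eq_zero fun a _ => if_neg (by omega)

end Kmat

theorem vecMul_chiK_apply (c : ℕ → ℝ) {m : ℕ} (v : Fin m → ℝ) (t : Fin m) :
    (v ᵥ* chiK c m) t =
      ∑ j ∈ Finset.range (m + 1), if h : j ≤ t then c j * v ⟨t - j, by omega⟩ else 0 := by
  simp only [chiK, vecMul_sum, vecMul_smul, Finset.sum_apply, Pi.smul_apply,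
    Kmat.vecMul_transpose_pow_apply, smul_eq_mul, mul_dite, mul_zero]

theorem vecMul_chibarK_apply (c : ℕ → ℝ) {m : ℕ} (v : Fin m → ℝ) (t : Fin m) :
    (v ᵥ* chibarK c m) t =
      ∑ j ∈ Finset.range (m + 1), if h : t < j then c j * v ⟨t + m - j, by omega⟩ else 0 := by
  simp only [chibarK, vecMul_sum, vecMul_smul, Finset.sum_apply, Pi.smul_apply,
    Kmat.vecMul_pow_apply, smul_eq_mul, mul_dite, mul_zero]
  rw [← Finset.sum_range_reflect]
  refine Finset.sum_congr rfl fun j hj => ?_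
  have hjm : j ≤ m := Nat.lt_succ_iff.mp (Finset.mem_range.mp hj)
  have hidx : t + (m - j) = t + m - j := by omega
  simp only [hidx, Nat.add_sub_cancel, Nat.sub_sub_self hjm]
  split_ifs <;> first | rfl | omega

/-- **Representation of the truncated matrix.**
`𝐗̃ = [0 1_p 1_p 0] ⬝ diag(𝐙, 𝐙) ⬝ [χ_n(K_nᵀ) ; χ̄_n(K_n)]`, where
`𝐗̃ = (X̃_{(i-1)n+t})_{i=1..p, t=1..n}` with `X̃_t = ∑_{j=0}^n c_j Z_{t-j}` and
`𝐙 = (Z_{(i-2)n+t})_{i=1..p+1, t=1..n}`. -/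
theorem truncated_matrix_representation
    (Z : ℤ → ℝ) (c : ℕ → ℝ) (p n : ℕ)
    (Xt : Matrix (Fin p) (Fin n) ℝ)
    (hXt : ∀ i t, Xt i t =
      ∑ j ∈ Finset.range (n + 1), c j * Z ((i : ℤ) * n + (t : ℤ) + 1 - (j : ℤ)))
    (Zm : Matrix (Fin (p + 1)) (Fin n) ℝ)
    (hZm : ∀ i t, Zm i t = Z ((i : ℤ) * n + (t : ℤ) + 1 - (n : ℤ))) :
    Xt = (Matrix.fromCols
            (Matrix.of fun (i : Fin p) (j : Fin (p + 1)) => if (j : ℕ) = (i : ℕ) + 1 then (1:ℝ) else 0)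
            (Matrix.of fun (i : Fin p) (j : Fin (p + 1)) => if (j : ℕ) = (i : ℕ) then (1:ℝ) else 0))
         * (Matrix.fromBlocks Zm 0 0 Zm)
         * (Matrix.fromRows (chiK c n) (chibarK c n)) := by
  rw [fromCols_mul_fromBlocks, Matrix.mul_zero, Matrix.mul_zero, add_zero, zero_add,
    fromCols_mul_fromRows, of_ite_val_eq_succ_mul, of_ite_val_eq_castSucc_mul]
  ext i t
  rw [hXt, Matrix.add_apply, mul_apply_eq_vecMul, mul_apply_eq_vecMul, vecMul_chiK_apply,
    vecMul_chibarK_apply, ← Finset.sum_add_distrib]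
  refine Finset.sum_congr rfl fun j hj => ?_
  by_cases hjt : j ≤ t
  · simp only [hjt, not_lt.mpr hjt, dite_true, dite_false, add_zero, submatrix_apply, id, hZm]
    congr 2
    push_cast [Fin.val_succ, hjt]
    ring
  · have hjn : j ≤ n := Nat.lt_succ_iff.mp (Finset.mem_range.mp hj)
    simp only [hjt, not_le.mp hjt, dite_true, dite_false, zero_add, submatrix_apply, id, hZm]
    congr 2
    push_cast [Fin.val_castSucc, show j ≤ t + n by omega]
    ring
end
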